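/- arXiv:math/0010094 — 2 statements merged into one kernel-verified Lean document; each statement's English description precedes it below -/
import Mathlib

section
/- Semigroup property of q²-fractional integration: for 0<q<1, real ν, μ > 0, and a bounded function g on the lattice {q^{2m} s : m ≥ 0}, define (D^{-ν} g)(s) = (1-q²)^ν s^ν ∑_{m=0}^{∞} q^{2m} ((q^{2ν};q²)_m/(q²;q²)_m) g(q^{2m} s). Then D^{-μ}(D^{-ν} g)(s) = D^{-(ν+μ)} g(s). -/
/-- The q-Pochhammer symbol `(a; q²)_n = ∏_{j=0}^{n-1} (1 - a q^{2j})`. -/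
noncomputable def qPoch (a q : ℝ) (n : ℕ) : ℝ :=
  ∏ j ∈ Finset.range n, (1 - a * q ^ (2 * j))

namespace QFracAux

lemma qPoch_zero (a q : ℝ) : qPoch a q 0 = 1 := by simp [qPoch]

lemma qPoch_succ (a q : ℝ) (n : ℕ) :
    qPoch a q (n + 1) = qPoch a q n * (1 - a * q ^ (2 * n)) :=
  Finset.prod_range_succ _ _

variable {q : ℝ}

lemma qPoch_pos (hq : 0 < q) (hq1 : q < 1) {a : ℝ} (ha0 : 0 ≤ a) (ha1 : a < 1) (n : ℕ) :
    0 < qPoch a q n := by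
  refine Finset.prod_pos fun j _ => ?_
  have h2 : a * q ^ (2 * j) ≤ a :=
    mul_le_of_le_one_right ha0 (pow_le_one₀ hq.le hq1.le)
  linarith

lemma qPoch_le_one (hq : 0 < q) (hq1 : q < 1) {a : ℝ} (ha0 : 0 ≤ a) (ha1 : a < 1) (n : ℕ) :
    qPoch a q n ≤ 1 := by
  refine Finset.prod_le_one (fun j _ => ?_) (fun j _ => ?_)
  · nlinarith [mul_le_of_le_one_right ha0 (pow_le_one₀ hq.le hq1.le (n := 2 * j))]
  · nlinarith [mul_nonneg ha0 (pow_nonneg hq.le (2 * j))]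

lemma qPoch_nonneg (hq : 0 < q) (hq1 : q < 1) {a : ℝ} (ha0 : 0 ≤ a) (ha1 : a < 1) (n : ℕ) :
    0 ≤ qPoch a q n := (qPoch_pos hq hq1 ha0 ha1 n).le

lemma sq_lt_one (hq : 0 < q) (hq1 : q < 1) : q ^ 2 < 1 := by nlinarith

lemma qPochQ_pos (hq : 0 < q) (hq1 : q < 1) (n : ℕ) : 0 < qPoch (q ^ 2) q n :=
  qPoch_pos hq hq1 (by positivity) (sq_lt_one hq hq1) n

lemma qPochQ_ne (hq : 0 < q) (hq1 : q < 1) (n : ℕ) : qPoch (q ^ 2) q n ≠ 0 :=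
  (qPochQ_pos hq hq1 n).ne'

/-- Gaussian binomial in pair form. -/
noncomputable def qBin (q : ℝ) (k m : ℕ) : ℝ :=
  qPoch (q ^ 2) q (k + m) / (qPoch (q ^ 2) q k * qPoch (q ^ 2) q m)

lemma qBin_zero_left (hq : 0 < q) (hq1 : q < 1) (m : ℕ) : qBin q 0 m = 1 := by
  unfold qBin
  rw [qPoch_zero, zero_add, one_mul, div_self (qPochQ_ne hq hq1 m)]

lemma qBin_zero_right (hq : 0 < q) (hq1 : q < 1) (k : ℕ) : qBin q k 0 = 1 := by
  unfold qBin
  rw [qPoch_zero, add_zero, mul_one, div_self (qPochQ_ne hq hq1 k)]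

lemma qBin_pascal (hq : 0 < q) (hq1 : q < 1) (k m : ℕ) :
    qBin q (k + 1) (m + 1) = qBin q (k + 1) m + q ^ (2 * (m + 1)) * qBin q k (m + 1) := by
  unfold qBin
  have e1 : k + 1 + (m + 1) = (k + m + 1) + 1 := by omega
  have e2 : k + 1 + m = k + m + 1 := by omega
  have e3 : k + (m + 1) = k + m + 1 := by omega
  rw [e1, e2, e3, qPoch_succ (q ^ 2) q (k + m + 1), qPoch_succ (q ^ 2) q k,
    qPoch_succ (q ^ 2) q m]
  have hk := qPochQ_ne hq hq1 k
  have hm := qPochQ_ne hq hq1 m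
  have hk1 : (1 : ℝ) - q ^ 2 * q ^ (2 * k) ≠ 0 := by
    have := qPochQ_pos hq hq1 (k + 1)
    rw [qPoch_succ] at this
    intro h
    rw [h, mul_zero] at this
    exact lt_irrefl 0 this
  have hm1 : (1 : ℝ) - q ^ 2 * q ^ (2 * m) ≠ 0 := by
    have := qPochQ_pos hq hq1 (m + 1)
    rw [qPoch_succ] at this
    intro h
    rw [h, mul_zero] at this
    exact lt_irrefl 0 this
  field_simp
  ring

lemma qVandermonde (hq : 0 < q) (hq1 : q < 1) (a b : ℝ) (n : ℕ) :
    ∑ k ∈ Finset.range (n + 1),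
      a ^ k * qPoch b q k * qPoch a q (n - k) * qBin q k (n - k)
      = qPoch (a * b) q n := by
  induction n with
  | zero => simp [qPoch_zero, qBin_zero_left hq hq1]
  | succ n ih =>
    have key : ∀ i ∈ Finset.range n,
        a ^ (i+1) * qPoch b q (i+1) * qPoch a q (n + 1 - (i+1)) * qBin q (i+1) (n + 1 - (i+1))
        = (a ^ (i+1) * qPoch b q (i+1) * qPoch a q (n - i) * qBin q (i+1) (n - 1 - i))
          + (a ^ (i+1) * qPoch b q (i+1) * qPoch a q (n - i) * (q ^ (2 * (n - i)) * qBin q i (n - i))) := by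
      intro i hi
      have hi' : i < n := Finset.mem_range.mp hi
      have h1 : n + 1 - (i + 1) = n - i := by omega
      have h2 : n - i = (n - 1 - i) + 1 := by omega
      rw [h1, h2, qBin_pascal hq hq1, ← h2]
      ring
    -- main rearrangement
    rw [Finset.sum_range_succ', Finset.sum_range_succ, Finset.sum_congr rfl key,
      Finset.sum_add_distrib]
    -- now : ∑ U + ∑ V + t(n+1) + t 0 where names as in plan
    have sum1 : (∑ i ∈ Finset.range n,
          a ^ (i+1) * qPoch b q (i+1) * qPoch a q (n - i) * qBin q (i+1) (n - 1 - i))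
        + a ^ 0 * qPoch b q 0 * qPoch a q (n + 1 - 0) * qBin q 0 (n + 1 - 0)
        = ∑ k ∈ Finset.range (n + 1),
            a ^ k * qPoch b q k * qPoch a q ((n - k) + 1) * qBin q k (n - k) := by
      rw [Finset.sum_range_succ']
      congr 1
      · refine Finset.sum_congr rfl fun i hi => ?_
        have hi' : i < n := Finset.mem_range.mp hi
        have h1 : (n - (i + 1)) + 1 = n - i := by omega
        have h2 : n - (i + 1) = n - 1 - i := by omega
        rw [h1, h2]
      · simp only [pow_zero, qPoch_zero, one_mul, Nat.sub_zero]
        rw [qBin_zero_left hq hq1, qBin_zero_left hq hq1]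
    have sum2 : (∑ i ∈ Finset.range n,
          a ^ (i+1) * qPoch b q (i+1) * qPoch a q (n - i) * (q ^ (2 * (n - i)) * qBin q i (n - i)))
        + a ^ (n+1) * qPoch b q (n+1) * qPoch a q (n + 1 - (n+1)) * qBin q (n+1) (n + 1 - (n+1))
        = ∑ k ∈ Finset.range (n + 1),
            a ^ (k+1) * qPoch b q (k+1) * qPoch a q (n - k) * (q ^ (2 * (n - k)) * qBin q k (n - k)) := by
      rw [Finset.sum_range_succ]
      congr 1
      simp only [Nat.sub_self]
      rw [qBin_zero_right hq hq1, qBin_zero_right hq hq1, qPoch_zero]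
      norm_num
    have sum1' : (∑ k ∈ Finset.range (n + 1),
          a ^ k * qPoch b q k * qPoch a q ((n - k) + 1) * qBin q k (n - k))
        = qPoch (a * b) q n
          - ∑ k ∈ Finset.range (n + 1),
              a ^ k * qPoch b q k * qPoch a q (n - k) * (a * q ^ (2 * (n - k)) * qBin q k (n - k)) := by
      rw [← ih, ← Finset.sum_sub_distrib]
      refine Finset.sum_congr rfl fun k _ => ?_
      rw [qPoch_succ]
      ring
    have sum2' : (∑ k ∈ Finset.range (n + 1),
          a ^ (k+1) * qPoch b q (k+1) * qPoch a q (n - k) * (q ^ (2 * (n - k)) * qBin q k (n - k)))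
        = (∑ k ∈ Finset.range (n + 1),
              a ^ k * qPoch b q k * qPoch a q (n - k) * (a * q ^ (2 * (n - k)) * qBin q k (n - k)))
          - a * b * q ^ (2 * n) * qPoch (a * b) q n := by
      rw [← ih, Finset.mul_sum, ← Finset.sum_sub_distrib]
      refine Finset.sum_congr rfl fun k hk => ?_
      have hk' : k < n + 1 := Finset.mem_range.mp hk
      have hpow : q ^ (2 * k) * q ^ (2 * (n - k)) = q ^ (2 * n) := by
        rw [← pow_add]
        congr 1
        omega
      rw [qPoch_succ, ← hpow]
      ring
    rw [qPoch_succ (a * b) q n]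
    linear_combination sum1 + sum2 + sum1' + sum2'

open Finset in
lemma qVandermonde' (hq : 0 < q) (hq1 : q < 1) (a b : ℝ) (n : ℕ) :
    ∑ p ∈ Finset.HasAntidiagonal.antidiagonal n,
      a ^ p.1 * (qPoch b q p.1 / qPoch (q ^ 2) q p.1) *
        (qPoch a q p.2 / qPoch (q ^ 2) q p.2)
      = qPoch (a * b) q n / qPoch (q ^ 2) q n := by
  rw [Finset.Nat.sum_antidiagonal_eq_sum_range_succ_mk,
    eq_div_iff (qPochQ_ne hq hq1 n), ← qVandermonde hq hq1 a b n, Finset.sum_mul]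
  refine Finset.sum_congr rfl fun k hk => ?_
  have hk' : k < n + 1 := Finset.mem_range.mp hk
  unfold qBin
  have hkn : k + (n - k) = n := by omega
  rw [hkn]
  have h1 := qPochQ_ne hq hq1 k
  have h2 := qPochQ_ne hq hq1 (n - k)
  field_simp

lemma qPochQ_ge (hq : 0 < q) (hq1 : q < 1) (n : ℕ) :
    Real.exp (-(q ^ 2 / (1 - q ^ 2) ^ 2)) ≤ qPoch (q ^ 2) q n := by
  have hQ1 : q ^ 2 < 1 := sq_lt_one hq hq1
  have hQ0 : (0:ℝ) < q ^ 2 := by positivity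
  have h1Q : (0:ℝ) < 1 - q ^ 2 := by linarith
  have step : ∀ j : ℕ,
      Real.exp (-(q ^ 2 * q ^ (2 * j) / (1 - q ^ 2))) ≤ 1 - q ^ 2 * q ^ (2 * j) := by
    intro j
    set x := q ^ 2 * q ^ (2 * j) with hx
    have hx0 : 0 < x := by positivity
    have hxQ : x ≤ q ^ 2 := mul_le_of_le_one_right hQ0.le (pow_le_one₀ hq.le hq1.le)
    have hx1 : 0 < 1 - x := by linarith
    have key : 1 / (1 - x) ≤ Real.exp (x / (1 - q ^ 2)) := by
      have h2 : 1 + x / (1 - q ^ 2) ≤ Real.exp (x / (1 - q ^ 2)) := by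
        have := Real.add_one_le_exp (x / (1 - q ^ 2)); linarith
      have h3 : x / (1 - x) ≤ x / (1 - q ^ 2) := by gcongr <;> linarith
      have h4 : 1 / (1 - x) = 1 + x / (1 - x) := by field_simp; ring
      linarith
    rw [Real.exp_neg]
    have h5 : (Real.exp (x / (1 - q ^ 2)))⁻¹ ≤ (1 / (1 - x))⁻¹ :=
      inv_anti₀ (by positivity) key
    calc (Real.exp (x / (1 - q ^ 2)))⁻¹ ≤ (1 / (1 - x))⁻¹ := h5
      _ = 1 - x := by rw [one_div, inv_inv]
  have sumb : ∑ j ∈ Finset.range n, q ^ 2 * q ^ (2 * j) / (1 - q ^ 2)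
      ≤ q ^ 2 / (1 - q ^ 2) ^ 2 := by
    have hgeom : ∑ j ∈ Finset.range n, (q ^ 2) ^ j ≤ (1 - q ^ 2)⁻¹ := by
      have hs := summable_geometric_of_lt_one hQ0.le hQ1
      have h := Summable.sum_le_tsum (Finset.range n) (fun i _ => by positivity) hs
      rwa [tsum_geometric_of_lt_one hQ0.le hQ1] at h
    have heq : ∑ j ∈ Finset.range n, q ^ 2 * q ^ (2 * j) / (1 - q ^ 2)
        = q ^ 2 / (1 - q ^ 2) * ∑ j ∈ Finset.range n, (q ^ 2) ^ j := by
      rw [Finset.mul_sum]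
      refine Finset.sum_congr rfl fun j _ => ?_
      rw [pow_mul]
      ring
    rw [heq]
    calc q ^ 2 / (1 - q ^ 2) * ∑ j ∈ Finset.range n, (q ^ 2) ^ j
        ≤ q ^ 2 / (1 - q ^ 2) * (1 - q ^ 2)⁻¹ := by
          apply mul_le_mul_of_nonneg_left hgeom (by positivity)
      _ = q ^ 2 / (1 - q ^ 2) ^ 2 := by field_simp
  calc Real.exp (-(q ^ 2 / (1 - q ^ 2) ^ 2))
      ≤ Real.exp (-(∑ j ∈ Finset.range n, q ^ 2 * q ^ (2 * j) / (1 - q ^ 2))) :=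
        Real.exp_le_exp.mpr (by linarith)
    _ = ∏ j ∈ Finset.range n, Real.exp (-(q ^ 2 * q ^ (2 * j) / (1 - q ^ 2))) := by
        rw [← Real.exp_sum]
        congr 1
        rw [Finset.sum_neg_distrib]
    _ ≤ ∏ j ∈ Finset.range n, (1 - q ^ 2 * q ^ (2 * j)) :=
        Finset.prod_le_prod (fun j _ => (Real.exp_pos _).le) (fun j _ => step j)
    _ = qPoch (q ^ 2) q n := rfl

lemma coeff_abs_le (hq : 0 < q) (hq1 : q < 1) {X : ℝ} (hX0 : 0 ≤ X) (hX1 : X < 1) (m : ℕ) :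
    |q ^ (2 * m) * (qPoch X q m / qPoch (q ^ 2) q m)|
      ≤ (q ^ 2) ^ m * (Real.exp (-(q ^ 2 / (1 - q ^ 2) ^ 2)))⁻¹ := by
  have hnum := qPoch_pos hq hq1 hX0 hX1 m
  have hle := qPoch_le_one hq hq1 hX0 hX1 m
  have hden := qPochQ_pos hq hq1 m
  have hKle := qPochQ_ge hq hq1 m
  have hKpos : (0:ℝ) < Real.exp (-(q ^ 2 / (1 - q ^ 2) ^ 2)) := Real.exp_pos _
  rw [abs_of_nonneg (mul_nonneg (by positivity) (div_nonneg hnum.le hden.le)), pow_mul]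
  apply mul_le_mul_of_nonneg_left _ (by positivity)
  calc qPoch X q m / qPoch (q ^ 2) q m
      ≤ 1 / Real.exp (-(q ^ 2 / (1 - q ^ 2) ^ 2)) := div_le_div₀ zero_le_one hle hKpos hKle
    _ = (Real.exp (-(q ^ 2 / (1 - q ^ 2) ^ 2)))⁻¹ := one_div _

end QFracAux

/-- The q²-fractional integral
`(D^{-ν} g)(s) = (1-q²)^ν s^ν ∑_{m≥0} q^{2m} ((q^{2ν};q²)_m/(q²;q²)_m) g(q^{2m}s)`,
where `q^{2ν}` and the outer powers are real powers. -/
noncomputable def qFracInt (q ν : ℝ) (g : ℝ → ℝ) : ℝ → ℝ := fun s =>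
  (1 - q ^ 2) ^ ν * s ^ ν *
    ∑' m : ℕ, q ^ (2 * m) * (qPoch (q ^ (2 * ν)) q m / qPoch (q ^ 2) q m) *
      g (q ^ (2 * m) * s)

/-- Semigroup property of q²-fractional integration. -/
theorem qFracInt_comp (q ν μ : ℝ) (hq : 0 < q) (hq1 : q < 1)
    (hν : 0 < ν) (hμ : 0 < μ) (g : ℝ → ℝ) (s : ℝ) (hs : 0 < s)
    (C : ℝ) (hg : ∀ m : ℕ, |g (q ^ (2 * m) * s)| ≤ C) :
    qFracInt q μ (qFracInt q ν g) s = qFracInt q (ν + μ) g s := by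
  have hq2 : (0:ℝ) < q ^ 2 := by positivity
  have hQ1 : q ^ 2 < 1 := QFracAux.sq_lt_one hq hq1
  have h1Q : (0:ℝ) < 1 - q ^ 2 := by linarith
  have hC0 : 0 ≤ C := le_trans (abs_nonneg _) (hg 0)
  simp only [qFracInt]
  set K : ℝ := Real.exp (-(q ^ 2 / (1 - q ^ 2) ^ 2)) with hK
  have hKpos : 0 < K := Real.exp_pos _
  set A : ℝ := q ^ (2 * ν) with hA
  set B : ℝ := q ^ (2 * μ) with hB
  have hA0 : 0 < A := Real.rpow_pos_of_pos hq _
  have hA1 : A < 1 := Real.rpow_lt_one hq.le hq1 (by linarith)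
  have hB0 : 0 < B := Real.rpow_pos_of_pos hq _
  have hB1 : B < 1 := Real.rpow_lt_one hq.le hq1 (by linarith)
  set F2 : ℕ × ℕ → ℝ := fun p =>
    (A ^ p.1 * (q ^ (2 * p.1) * (qPoch B q p.1 / qPoch (q ^ 2) q p.1)))
      * (q ^ (2 * p.2) * (qPoch A q p.2 / qPoch (q ^ 2) q p.2) *
          g (q ^ (2 * (p.1 + p.2)) * s)) with hF2
  -- summability of the double family
  have hbound : ∀ p : ℕ × ℕ,
      ‖F2 p‖ ≤ ((q ^ 2) ^ p.1 * K⁻¹) * (((q ^ 2) ^ p.2 * K⁻¹) * C) := by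
    intro p
    have h1 : |A ^ p.1| ≤ 1 := by
      rw [abs_of_nonneg (pow_nonneg hA0.le _)]
      exact pow_le_one₀ hA0.le hA1.le
    have h2 := QFracAux.coeff_abs_le hq hq1 hB0.le hB1 p.1
    have h3 := QFracAux.coeff_abs_le hq hq1 hA0.le hA1 p.2
    have h4 : |g (q ^ (2 * (p.1 + p.2)) * s)| ≤ C := hg (p.1 + p.2)
    have e : ‖F2 p‖ = |A ^ p.1| * |q ^ (2 * p.1) * (qPoch B q p.1 / qPoch (q ^ 2) q p.1)|
        * (|q ^ (2 * p.2) * (qPoch A q p.2 / qPoch (q ^ 2) q p.2)|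
            * |g (q ^ (2 * (p.1 + p.2)) * s)|) := by
      rw [hF2, Real.norm_eq_abs, abs_mul, abs_mul (A ^ p.1),
        abs_mul (q ^ (2 * p.2) * (qPoch A q p.2 / qPoch (q ^ 2) q p.2))]
    rw [e]
    have hr1 : |A ^ p.1| * |q ^ (2 * p.1) * (qPoch B q p.1 / qPoch (q ^ 2) q p.1)|
        ≤ 1 * ((q ^ 2) ^ p.1 * K⁻¹) :=
      mul_le_mul h1 h2 (abs_nonneg _) zero_le_one
    have hr2 : |q ^ (2 * p.2) * (qPoch A q p.2 / qPoch (q ^ 2) q p.2)|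
          * |g (q ^ (2 * (p.1 + p.2)) * s)|
        ≤ ((q ^ 2) ^ p.2 * K⁻¹) * C :=
      mul_le_mul h3 h4 (abs_nonneg _) (by positivity)
    calc |A ^ p.1| * |q ^ (2 * p.1) * (qPoch B q p.1 / qPoch (q ^ 2) q p.1)|
        * (|q ^ (2 * p.2) * (qPoch A q p.2 / qPoch (q ^ 2) q p.2)|
            * |g (q ^ (2 * (p.1 + p.2)) * s)|)
        ≤ 1 * ((q ^ 2) ^ p.1 * K⁻¹) * (((q ^ 2) ^ p.2 * K⁻¹) * C) :=
          mul_le_mul hr1 hr2 (mul_nonneg (abs_nonneg _) (abs_nonneg _)) (by positivity)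
      _ = ((q ^ 2) ^ p.1 * K⁻¹) * (((q ^ 2) ^ p.2 * K⁻¹) * C) := by ring
  have hsumbig : Summable (fun p : ℕ × ℕ =>
      ((q ^ 2) ^ p.1 * K⁻¹) * (((q ^ 2) ^ p.2 * K⁻¹) * C)) := by
    have hf : Summable (fun k : ℕ => (q ^ 2) ^ k * K⁻¹) :=
      (summable_geometric_of_lt_one hq2.le hQ1).mul_right _
    have hgs : Summable (fun m : ℕ => (q ^ 2) ^ m * K⁻¹ * C) :=
      ((summable_geometric_of_lt_one hq2.le hQ1).mul_right _).mul_right _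
    have := Summable.mul_of_nonneg hf hgs (fun k => by positivity) (fun m => by positivity)
    simpa [mul_assoc] using this
  have hsum2 : Summable F2 :=
    Summable.of_norm (Summable.of_nonneg_of_le (fun p => norm_nonneg _) hbound hsumbig)
  -- rearrangement per k
  have keyk : ∀ k : ℕ,
      q ^ (2 * k) * (qPoch B q k / qPoch (q ^ 2) q k) *
        ((1 - q ^ 2) ^ ν * (q ^ (2 * k) * s) ^ ν *
          ∑' m : ℕ, q ^ (2 * m) * (qPoch A q m / qPoch (q ^ 2) q m) *
            g (q ^ (2 * m) * (q ^ (2 * k) * s)))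
      = ((1 - q ^ 2) ^ ν * s ^ ν) * ∑' m : ℕ, F2 (k, m) := by
    intro k
    have hr : (q ^ (2 * k) * s) ^ ν = A ^ k * s ^ ν := by
      rw [Real.mul_rpow (by positivity) hs.le]
      congr 1
      calc ((q : ℝ) ^ (2 * k)) ^ ν = (q ^ (((2 * k : ℕ) : ℝ))) ^ ν := by
            rw [Real.rpow_natCast]
        _ = q ^ ((((2 * k : ℕ)) : ℝ) * ν) := (Real.rpow_mul hq.le _ _).symm
        _ = q ^ ((2 * ν) * ((k : ℕ) : ℝ)) := by congr 1; push_cast; ring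
        _ = (q ^ (2 * ν)) ^ (((k : ℕ)) : ℝ) := Real.rpow_mul hq.le _ _
        _ = A ^ k := by rw [Real.rpow_natCast]
    have harg : (∑' m : ℕ, q ^ (2 * m) * (qPoch A q m / qPoch (q ^ 2) q m) *
          g (q ^ (2 * m) * (q ^ (2 * k) * s)))
        = ∑' m : ℕ, q ^ (2 * m) * (qPoch A q m / qPoch (q ^ 2) q m) *
            g (q ^ (2 * (k + m)) * s) := by
      refine tsum_congr fun m => ?_
      rw [← mul_assoc, ← pow_add, show 2 * m + 2 * k = 2 * (k + m) from by ring]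
    have hpull : (∑' m : ℕ, F2 (k, m))
        = (A ^ k * (q ^ (2 * k) * (qPoch B q k / qPoch (q ^ 2) q k))) *
            ∑' m : ℕ, q ^ (2 * m) * (qPoch A q m / qPoch (q ^ 2) q m) *
              g (q ^ (2 * (k + m)) * s) := by
      simp only [hF2]
      exact tsum_mul_left
    rw [hr, harg, hpull]
    ring
  -- double sum identities
  have E1 : ∑' p : ℕ × ℕ, F2 p = ∑' k : ℕ, ∑' m : ℕ, F2 (k, m) :=
    Summable.tsum_prod' hsum2 hsum2.prod_factor
  have E2 : ∑' p : ℕ × ℕ, F2 p = ∑' n : ℕ, ∑ p ∈ Finset.HasAntidiagonal.antidiagonal n, F2 p := by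
    rw [← Finset.HasAntidiagonal.sigmaAntidiagonalEquivProd.tsum_eq F2]
    conv_rhs => congr; ext; rw [← Finset.sum_finset_coe, ← tsum_fintype (L := SummationFilter.unconditional _)]
    exact Summable.tsum_sigma' (fun n => (hasSum_fintype _).summable)
      (Finset.HasAntidiagonal.sigmaAntidiagonalEquivProd.summable_iff.mpr hsum2)
  have E3 : ∀ n : ℕ, ∑ p ∈ Finset.HasAntidiagonal.antidiagonal n, F2 p
      = q ^ (2 * n) * g (q ^ (2 * n) * s) * (qPoch (A * B) q n / qPoch (q ^ 2) q n) := by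
    intro n
    rw [← QFracAux.qVandermonde' hq hq1 A B n, Finset.mul_sum]
    refine Finset.sum_congr rfl fun p hp => ?_
    have hpn : p.1 + p.2 = n := Finset.HasAntidiagonal.mem_antidiagonal.mp hp
    rw [hF2, ← hpn, show 2 * (p.1 + p.2) = 2 * p.1 + 2 * p.2 from by ring, pow_add]
    ring
  -- prefactor identities
  have hAB : q ^ (2 * (ν + μ)) = A * B := by
    rw [show 2 * (ν + μ) = 2 * ν + 2 * μ from by ring, Real.rpow_add hq, hA, hB]
  have hCsplit : (1 - q ^ 2) ^ (ν + μ) = (1 - q ^ 2) ^ ν * (1 - q ^ 2) ^ μ :=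
    Real.rpow_add h1Q ν μ
  have hssplit : s ^ (ν + μ) = s ^ ν * s ^ μ := Real.rpow_add hs ν μ
  -- assemble
  rw [tsum_congr keyk, tsum_mul_left, ← E1, E2, tsum_congr E3, hAB, hCsplit, hssplit,
    tsum_congr (fun n => show q ^ (2 * n) * (qPoch (A * B) q n / qPoch (q ^ 2) q n) *
      g (q ^ (2 * n) * s) = q ^ (2 * n) * g (q ^ (2 * n) * s) *
        (qPoch (A * B) q n / qPoch (q ^ 2) q n) from by ring)]
  ring
end

section
/- For 0<q<1 and a function ψ on the lattice {±q^{2n}} bounded by a constant C (|ψ(±q^{2n})| ≤ C for all n ∈ ℤ), the q²-shift operator given by (T_{q^{2m}}ψ)(s) = ∑_{k=0}^{∞} (q^{2k(k+m)}/(q²;q²)_k) s^{-k} E_{q²}(-q^{2(m+k+1)} s^{-1}) ψ(q^{-2k}s) satisfies |(T_{q^{2m}}ψ)(q^{2n})| ≤ C for all integers m, n. -/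
open Finset

/-- The q-exponential `E_{q²}(x) = ∑_{j≥0} q^{j(j-1)} x^j / (q²;q²)_j`. -/
noncomputable def Eq2 (q x : ℝ) : ℝ :=
  ∑' j : ℕ, q ^ (j * (j - 1)) * x ^ j / qPoch (q ^ 2) q j


/-- The q²-shift operator
`(T_{q^{2m}}ψ)(s) = ∑_{k≥0} (q^{2k(k+m)}/(q²;q²)_k) s^{-k} E_{q²}(-q^{2(m+k+1)} s^{-1}) ψ(q^{-2k}s)`. -/
noncomputable def Tshift (q : ℝ) (m : ℤ) (ψ : ℝ → ℝ) (s : ℝ) : ℝ :=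
  ∑' k : ℕ, q ^ (2 * (k : ℤ) * ((k : ℤ) + m)) / qPoch (q ^ 2) q k * s ^ (-(k : ℤ)) *
    Eq2 q (-(q ^ (2 * (m + (k : ℤ) + 1))) * s⁻¹) * ψ (q ^ (-(2 : ℤ) * (k : ℤ)) * s)

noncomputable def PP (q : ℝ) (k : ℕ) : ℝ := qPoch (q ^ 2) q k

noncomputable def aa (q : ℝ) (j : ℕ) : ℝ := q ^ (j * (j - 1)) / PP q j

section Basics

variable {q : ℝ} (hq : 0 < q) (hq1 : q < 1)

lemma PP_eq (k : ℕ) : PP q k = ∏ i ∈ range k, (1 - q ^ (2 * i + 2)) := by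
  unfold PP qPoch
  refine Finset.prod_congr rfl fun i _ => ?_
  ring_nf

include hq hq1 in
lemma PP_pos (k : ℕ) : 0 < PP q k := by
  rw [PP_eq]
  refine Finset.prod_pos fun i _ => ?_
  have : q ^ (2 * i + 2) < 1 := pow_lt_one₀ hq.le hq1 (by omega)
  linarith

include hq hq1 in
lemma PP_le_one (k : ℕ) : PP q k ≤ 1 := by
  rw [PP_eq]
  refine Finset.prod_le_one (fun i _ => ?_) (fun i _ => ?_)
  · have : q ^ (2 * i + 2) < 1 := pow_lt_one₀ hq.le hq1 (by omega)
    linarith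
  · have : 0 < q ^ (2 * i + 2) := pow_pos hq _
    linarith

lemma PP_succ (k : ℕ) : PP q (k + 1) = PP q k * (1 - q ^ (2 * k + 2)) := by
  rw [PP_eq, PP_eq, Finset.prod_range_succ]

include hq hq1 in
lemma PP_antitone : ∀ {j k : ℕ}, j ≤ k → PP q k ≤ PP q j := by
  intro j k h
  induction k with
  | zero => simp_all
  | succ n ih =>
    rcases Nat.lt_or_ge j (n+1) with h' | h'
    · have h2 : PP q n ≤ PP q j := ih (by omega)
      rw [PP_succ]
      have hp := PP_pos hq hq1 n
      have : q ^ (2 * n + 2) < 1 := pow_lt_one₀ hq.le hq1 (by omega)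
      have h3 : 0 < q ^ (2 * n + 2) := pow_pos hq _
      nlinarith
    · have : j = n + 1 := by omega
      simp [this]

/-- Weierstrass inequality. -/
lemma one_sub_sum_le_prod (s : Finset ℕ) (g : ℕ → ℝ) (h0 : ∀ i ∈ s, 0 ≤ g i)
    (h1 : ∀ i ∈ s, g i ≤ 1) : 1 - ∑ i ∈ s, g i ≤ ∏ i ∈ s, (1 - g i) := by
  classical
  induction s using Finset.cons_induction with
  | empty => simp
  | cons a s ha ih =>
    rw [Finset.prod_cons, Finset.sum_cons]
    have h0a := h0 a (Finset.mem_cons_self a s)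
    have h1a := h1 a (Finset.mem_cons_self a s)
    have ih' := ih (fun i hi => h0 i (Finset.mem_cons_of_mem hi))
      (fun i hi => h1 i (Finset.mem_cons_of_mem hi))
    have hs : 0 ≤ ∑ i ∈ s, g i := Finset.sum_nonneg fun i hi => h0 i (Finset.mem_cons_of_mem hi)
    nlinarith

include hq hq1 in
/-- Uniform positive lower bound for the q-Pochhammer symbols. -/
lemma exists_PP_lb : ∃ D : ℝ, 0 < D ∧ ∀ k, D ≤ PP q k := by
  have hq2 : (0:ℝ) < q ^ 2 := pow_pos hq 2
  have hq21 : q ^ 2 < 1 := pow_lt_one₀ hq.le hq1 (by norm_num)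
  obtain ⟨M, hM⟩ := exists_pow_lt_of_lt_one (x := (1 - q^2)/2) (y := q^2) (by linarith) hq21
  refine ⟨PP q M / 2, by have := PP_pos hq hq1 M; linarith, fun k => ?_⟩
  rcases Nat.lt_or_ge k M with h | h
  · have := PP_antitone hq hq1 h.le
    have := PP_pos hq hq1 k
    have := PP_pos hq hq1 M
    linarith
  · have key : PP q k = PP q M * ∏ i ∈ Ico M k, (1 - q ^ (2 * i + 2)) := by
      rw [PP_eq, PP_eq, ← Finset.prod_range_mul_prod_Ico _ h]
    have hsum : ∑ i ∈ Ico M k, q ^ (2 * i + 2) ≤ 1 / 2 := by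
      rw [Finset.sum_Ico_eq_sum_range]
      have heq : ∀ t, q ^ (2 * (M + t) + 2) = q ^ (2 * M + 2) * (q ^ 2) ^ t := by
        intro t; rw [← pow_mul]; rw [← pow_add]; ring_nf
      calc ∑ t ∈ range (k - M), q ^ (2 * (M + t) + 2)
          = q ^ (2 * M + 2) * ∑ t ∈ range (k - M), (q^2) ^ t := by
            rw [Finset.mul_sum]; exact Finset.sum_congr rfl fun t _ => heq t
        _ ≤ q ^ (2 * M + 2) * (1 / (1 - q^2)) := by
            refine mul_le_mul_of_nonneg_left ?_ (pow_nonneg hq.le _)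
            rw [geom_sum_eq (by linarith : q^2 ≠ 1)]
            have h4 : 0 ≤ (q^2) ^ (k - M) := pow_nonneg hq2.le _
            have h5 : ((q ^ 2) ^ (k - M) - 1) / (q ^ 2 - 1) = (1 - (q ^ 2) ^ (k - M)) / (1 - q ^ 2) := by
              rw [div_eq_div_iff (by linarith) (by linarith)]; ring
            rw [h5]
            gcongr
            · linarith
        _ ≤ 1 / 2 := by
            have h1 : q ^ (2 * M + 2) = q ^ 2 * (q^2)^M := by rw [← pow_mul, ← pow_add]; ring_nf
            have h2 : 0 < 1 - q ^ 2 := by linarith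
            rw [h1]
            rw [mul_one_div, div_le_iff₀ h2]
            nlinarith [hq2.le, (pow_nonneg hq2.le M), hq2]
    have hprod : 1 / 2 ≤ ∏ i ∈ Ico M k, (1 - q ^ (2 * i + 2)) := by
      have := one_sub_sum_le_prod (Ico M k) (fun i => q ^ (2 * i + 2))
        (fun i _ => pow_nonneg hq.le _)
        (fun i _ => (pow_lt_one₀ hq.le hq1 (by omega)).le)
      linarith
    rw [key]
    have hM' := PP_pos hq hq1 M
    calc PP q M / 2 = PP q M * (1/2) := by ring
      _ ≤ PP q M * ∏ i ∈ Ico M k, (1 - q ^ (2 * i + 2)) :=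
          mul_le_mul_of_nonneg_left hprod hM'.le

end Basics
section Series

variable {q : ℝ} (hq : 0 < q) (hq1 : q < 1)

include hq hq1 in
lemma aa_pos (j : ℕ) : 0 < aa q j :=
  div_pos (pow_pos hq _) (PP_pos hq hq1 j)

lemma aa_zero : aa q 0 = 1 := by simp [aa, PP, qPoch]

include hq hq1 in
lemma aa_succ (j : ℕ) : aa q (j + 1) * (1 - q ^ (2 * j + 2)) = aa q j * q ^ (2 * j) := by
  have hP := PP_pos hq hq1 j
  have hP1 := PP_pos hq hq1 (j + 1)
  have hfac : (0:ℝ) < 1 - q ^ (2 * j + 2) := by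
    have : q ^ (2 * j + 2) < 1 := pow_lt_one₀ hq.le hq1 (by omega)
    linarith
  have hexp : (j + 1) * ((j + 1) - 1) = j * (j - 1) + 2 * j := by
    rcases j with _ | k
    · rfl
    · simp only [Nat.add_sub_cancel]
      ring
  unfold aa
  rw [PP_succ, hexp, pow_add]
  field_simp

include hq hq1 in
lemma summable_aaz (x : ℝ) : Summable (fun j => aa q j * x ^ j) := by
  have hq2 : (0:ℝ) < q ^ 2 := pow_pos hq 2
  have hq21 : q ^ 2 < 1 := pow_lt_one₀ hq.le hq1 (by norm_num)
  obtain ⟨J, hJ⟩ := exists_pow_lt_of_lt_one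
    (x := (1 - q ^ 2) / (2 * (|x| + 1))) (y := q ^ 2)
    (div_pos (by linarith) (by positivity)) hq21
  refine summable_of_ratio_norm_eventually_le (r := 1/2) (by norm_num) ?_
  filter_upwards [Filter.eventually_ge_atTop J] with j hj
  have hP := PP_pos hq hq1 j
  have haj := aa_pos hq hq1 j
  have haj1 := aa_pos hq hq1 (j + 1)
  have hfac : (0:ℝ) < 1 - q ^ (2 * j + 2) := by
    have : q ^ (2 * j + 2) < 1 := pow_lt_one₀ hq.le hq1 (by omega)
    linarith
  have hrec : aa q (j + 1) = aa q j * q ^ (2 * j) / (1 - q ^ (2 * j + 2)) := by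
    rw [eq_div_iff hfac.ne', aa_succ hq hq1]
  have hmono : (q ^ 2) ^ j ≤ (q ^ 2) ^ J := pow_le_pow_of_le_one hq2.le hq21.le hj
  have hqj : q ^ (2 * j) = (q ^ 2) ^ j := by rw [← pow_mul]
  have hfac2 : 1 - q ^ (2 * j + 2) ≥ 1 - q ^ 2 := by
    have : q ^ (2 * j + 2) ≤ q ^ 2 := pow_le_pow_of_le_one hq.le hq1.le (by omega)
    linarith
  rw [Real.norm_eq_abs, Real.norm_eq_abs, abs_mul, abs_mul, abs_pow, abs_pow,
    abs_of_pos haj1, abs_of_pos haj, pow_succ, hrec]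
  have hkey : q ^ (2 * j) * |x| / (1 - q ^ (2 * j + 2)) ≤ 1 / 2 := by
    rw [div_le_iff₀ hfac]
    have h1 : q ^ (2 * j) * |x| ≤ (q^2)^J * (|x| + 1) := by
      rw [hqj]
      have hx0 : 0 ≤ |x| := abs_nonneg x
      nlinarith [pow_nonneg hq2.le j, pow_nonneg hq2.le J]
    have h2 : (q^2)^J * (|x| + 1) ≤ (1 - q^2)/2 := by
      have hx1 : (0:ℝ) < |x| + 1 := by positivity
      rw [lt_div_iff₀ (by positivity : (0:ℝ) < 2*(|x|+1))] at hJ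
      nlinarith
    nlinarith [mul_nonneg (pow_nonneg hq.le (2*j)) (abs_nonneg x)]
  calc aa q j * q ^ (2 * j) / (1 - q ^ (2 * j + 2)) * (|x| ^ j * |x|)
      = (q ^ (2 * j) * |x| / (1 - q ^ (2 * j + 2))) * (aa q j * |x| ^ j) := by ring
    _ ≤ 1 / 2 * (aa q j * |x| ^ j) := by
        refine mul_le_mul_of_nonneg_right hkey ?_
        positivity

end Series
section FunEq

variable {q : ℝ} (hq : 0 < q) (hq1 : q < 1)

lemma Eq2_eq (x : ℝ) : Eq2 q x = ∑' j, aa q j * x ^ j := by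
  unfold Eq2 aa PP
  exact tsum_congr fun j => by ring

include hq hq1 in
lemma funEq (x : ℝ) : Eq2 q x = Eq2 q (q ^ 2 * x) + x * Eq2 q (q ^ 2 * x) := by
  have hb : Summable (fun j => aa q j * x ^ j) := summable_aaz hq hq1 x
  have hc : Summable (fun j => aa q j * (q ^ 2 * x) ^ j) := summable_aaz hq hq1 _
  have hc1 : Summable (fun j : ℕ => aa q (j+1) * (q ^ 2 * x) ^ (j+1)) :=
    (summable_nat_add_iff (f := fun j => aa q j * (q ^ 2 * x) ^ j) 1).mpr hc
  have key : ∀ j : ℕ, aa q (j+1) * x ^ (j+1) =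
      aa q (j+1) * (q ^ 2 * x) ^ (j+1) + x * (aa q j * (q ^ 2 * x) ^ j) := by
    intro j
    have h2 : (q ^ 2 * x) ^ (j+1) = q ^ (2*j+2) * x ^ (j+1) := by
      rw [mul_pow, ← pow_mul]; ring
    have h3 : (q ^ 2 * x) ^ j = q ^ (2*j) * x ^ j := by
      rw [mul_pow, ← pow_mul]
    rw [h2, h3]
    have h1 : aa q j * q ^ (2*j) = aa q (j+1) * (1 - q ^ (2*j+2)) := (aa_succ hq hq1 j).symm
    linear_combination (-(x ^ (j+1))) * h1
  rw [Eq2_eq, Eq2_eq, Summable.tsum_eq_zero_add hb]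
  have hsplit : ∑' j : ℕ, aa q (j+1) * x ^ (j+1)
      = (∑' j : ℕ, aa q (j+1) * (q ^ 2 * x) ^ (j+1)) + x * ∑' j : ℕ, aa q j * (q ^ 2 * x) ^ j := by
    calc ∑' j : ℕ, aa q (j+1) * x ^ (j+1)
        = ∑' j : ℕ, (aa q (j+1) * (q ^ 2 * x) ^ (j+1) + x * (aa q j * (q ^ 2 * x) ^ j)) :=
          tsum_congr key
      _ = (∑' j : ℕ, aa q (j+1) * (q ^ 2 * x) ^ (j+1))
            + ∑' j : ℕ, x * (aa q j * (q ^ 2 * x) ^ j) := Summable.tsum_add hc1 (hc.mul_left x)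
      _ = _ := by rw [tsum_mul_left]
  rw [hsplit, Summable.tsum_eq_zero_add hc]
  ring

include hq hq1 in
lemma funEq_step (t : ℤ) :
    Eq2 q (-(q ^ (2 * t))) = (1 - q ^ (2 * t)) * Eq2 q (-(q ^ (2 * (t + 1)))) := by
  have harg : q ^ (2:ℕ) * -(q ^ (2*t)) = -(q ^ (2*(t+1))) := by
    rw [mul_neg, ← zpow_natCast q 2, ← zpow_add₀ hq.ne']
    congr 1
    push_cast
    ring
  have h := funEq hq hq1 (-(q ^ (2*t)))
  rw [harg] at h
  rw [h]; ring

include hq hq1 in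
/-- Chain of functional equations. -/
lemma chain : ∀ (M : ℕ) (t : ℤ),
    Eq2 q (-(q ^ (2 * t))) =
      (∏ i ∈ Finset.range M, (1 - q ^ (2 * (t + i)))) * Eq2 q (-(q ^ (2 * (t + M)))) := by
  intro M
  induction M with
  | zero => intro t; simp
  | succ M ih =>
    intro t
    rw [funEq_step hq hq1 t, ih (t + 1)]
    rw [Finset.prod_range_succ']
    have e1 : ∀ i ∈ Finset.range M, (1 - q ^ (2*(t + 1 + (i:ℤ)))) = 1 - q ^ (2*(t + ((i+1 : ℕ) : ℤ))) := by
      intro i _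
      congr 2
      push_cast
      ring
    rw [Finset.prod_congr rfl e1]
    have e2 : Eq2 q (-(q ^ (2*(t + 1 + (M:ℤ))))) = Eq2 q (-(q ^ (2*(t + ((M+1 : ℕ) : ℤ))))) := by
      congr 3
      push_cast
      ring
    rw [e2]
    norm_num
    ring

include hq hq1 in
lemma Eq2_zero_of_nonpos (t : ℤ) (ht : t ≤ 0) : Eq2 q (-(q ^ (2 * t))) = 0 := by
  have h := chain hq hq1 ((1 - t).toNat) t
  rw [h, Finset.prod_eq_zero (i := (-t).toNat) (by simp; omega)]
  · ring
  · have he : t + (((-t).toNat : ℕ) : ℤ) = 0 := by omega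
    rw [he]
    norm_num

end FunEq
section Bounds

variable {q : ℝ} (hq : 0 < q) (hq1 : q < 1)

include hq hq1 in
lemma summable_aa : Summable (aa q) := by
  have := summable_aaz hq hq1 1
  simpa using this

include hq hq1 in
lemma Eabs (z : ℝ) (hz : |z| ≤ 1) : |Eq2 q z| ≤ ∑' j, aa q j := by
  rw [Eq2_eq]
  have h1 : Summable (fun j : ℕ => ‖aa q j * z ^ j‖) := by
    have := summable_aaz hq hq1 |z|
    refine this.congr fun j => ?_
    rw [norm_mul, norm_pow, Real.norm_eq_abs, Real.norm_eq_abs,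
      abs_of_pos (aa_pos hq hq1 j)]
  calc |∑' j, aa q j * z ^ j| ≤ ∑' j, ‖aa q j * z ^ j‖ := norm_tsum_le_tsum_norm h1
    _ ≤ ∑' j, aa q j := by
        refine Summable.tsum_le_tsum (fun j => ?_) h1 (summable_aa hq hq1)
        rw [norm_mul, norm_pow, Real.norm_eq_abs, Real.norm_eq_abs,
          abs_of_pos (aa_pos hq hq1 j)]
        have h2 : |z| ^ j ≤ 1 := pow_le_one₀ (abs_nonneg z) hz
        nlinarith [aa_pos hq hq1 j]

include hq hq1 in
lemma Eq2_sub_one (z : ℝ) (hz : |z| ≤ 1) :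
    |Eq2 q z - 1| ≤ |z| * ∑' j, aa q (j + 1) := by
  have hb : Summable (fun j : ℕ => aa q j * z ^ j) := summable_aaz hq hq1 z
  have hb1 : Summable (fun j : ℕ => aa q (j+1) * z ^ (j+1)) :=
    (summable_nat_add_iff (f := fun j => aa q j * z ^ j) 1).mpr hb
  have habs : Summable (fun j : ℕ => aa q (j+1) * |z| ^ (j+1)) :=
    (summable_nat_add_iff (f := fun j => aa q j * |z| ^ j) 1).mpr (summable_aaz hq hq1 |z|)
  have hS1 : Summable (fun j : ℕ => aa q (j+1)) :=
    (summable_nat_add_iff (f := aa q) 1).mpr (summable_aa hq hq1)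
  have h0 : Eq2 q z - 1 = ∑' j : ℕ, aa q (j+1) * z ^ (j+1) := by
    rw [Eq2_eq, Summable.tsum_eq_zero_add hb, aa_zero]
    ring
  rw [h0]
  have hnorm : Summable (fun j : ℕ => ‖aa q (j+1) * z ^ (j+1)‖) := by
    refine habs.congr fun j => ?_
    rw [norm_mul, norm_pow, Real.norm_eq_abs, Real.norm_eq_abs,
      abs_of_pos (aa_pos hq hq1 (j+1))]
  calc |∑' j : ℕ, aa q (j+1) * z ^ (j+1)| ≤ ∑' j : ℕ, ‖aa q (j+1) * z ^ (j+1)‖ :=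
        norm_tsum_le_tsum_norm hnorm
    _ ≤ ∑' j : ℕ, aa q (j+1) * |z| := by
        refine Summable.tsum_le_tsum (fun j => ?_) hnorm (hS1.mul_right |z|)
        rw [norm_mul, norm_pow, Real.norm_eq_abs, Real.norm_eq_abs,
          abs_of_pos (aa_pos hq hq1 (j+1))]
        have h2 : |z| ^ (j+1) ≤ |z| := pow_le_of_le_one (abs_nonneg z) hz (by omega)
        nlinarith [aa_pos hq hq1 (j+1)]
    _ = |z| * ∑' j : ℕ, aa q (j+1) := by rw [tsum_mul_left.symm.trans (tsum_congr fun j => mul_comm |z| (aa q (j+1)))]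

include hq hq1 in
lemma Eq2_lattice_nonneg (t : ℤ) : 0 ≤ Eq2 q (-(q ^ (2 * t))) := by
  rcases le_or_gt t 0 with ht | ht
  · rw [Eq2_zero_of_nonpos hq hq1 t ht]
  · -- t ≥ 1
    set SB := ∑' j, aa q (j + 1) with hSB
    have hSBnn : 0 ≤ SB := tsum_nonneg fun j => (aa_pos hq hq1 (j+1)).le
    have hq2 : (0:ℝ) < q ^ 2 := pow_pos hq 2
    have hq21 : q ^ 2 < 1 := pow_lt_one₀ hq.le hq1 (by norm_num)
    obtain ⟨M, hM⟩ := exists_pow_lt_of_lt_one (x := 1 / (SB + 1)) (y := q ^ 2)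
      (by positivity) hq21
    have hzsmall : ∀ i : ℕ, (0:ℤ) ≤ t + i := fun i => by positivity
    have habs : |(-(q ^ (2 * (t + M))))| ≤ (q^2)^M := by
      rw [abs_neg, abs_of_pos (zpow_pos hq _)]
      have h1 : q ^ (2 * (t + (M:ℤ))) = q ^ (2 * t) * q ^ (2 * (M:ℤ)) := by
        rw [← zpow_add₀ hq.ne']; congr 1; ring
      have h2 : q ^ (2 * (M:ℤ)) = (q^2)^M := by
        rw [← zpow_natCast (q^2) M, ← zpow_natCast q 2, ← zpow_mul]
        norm_num
      rw [h1, h2]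
      have h3 : q ^ (2 * t) ≤ 1 := zpow_le_one₀ hq hq1.le (by omega)
      nlinarith [zpow_pos hq (2*t), pow_pos hq2 M, pow_nonneg hq2.le M]
    have habs1 : |(-(q ^ (2 * (t + M))))| ≤ 1 := by
      refine habs.trans (pow_le_one₀ hq2.le hq21.le)
    have hpos : 0 < Eq2 q (-(q ^ (2 * (t + M)))) := by
      have h4 := Eq2_sub_one hq hq1 _ habs1
      have h5 : |(-(q ^ (2 * (t + M))))| * SB ≤ (q^2)^M * SB :=
        mul_le_mul_of_nonneg_right habs hSBnn
      have h6 : (q^2)^M * SB < 1 := by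
        rw [lt_div_iff₀ (by positivity : (0:ℝ) < SB + 1)] at hM
        nlinarith [pow_nonneg hq2.le M]
      have h7 := abs_le.mp h4
      linarith [h7.1]
    rw [chain hq hq1 M t]
    refine mul_nonneg (Finset.prod_nonneg fun i _ => ?_) hpos.le
    have : q ^ (2 * (t + (i:ℤ))) ≤ 1 := zpow_le_one₀ hq hq1.le (by have := hzsmall i; omega)
    linarith

include hq hq1 in
lemma Eq2_lattice_le (t : ℤ) : Eq2 q (-(q ^ (2 * t))) ≤ ∑' j, aa q j := by
  rcases le_or_gt t 0 with ht | ht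
  · rw [Eq2_zero_of_nonpos hq hq1 t ht]
    exact tsum_nonneg fun j => (aa_pos hq hq1 j).le
  · have habs : |(-(q ^ (2 * t)))| ≤ 1 := by
      rw [abs_neg, abs_of_pos (zpow_pos hq _)]
      exact zpow_le_one₀ hq hq1.le (by omega)
    exact (le_abs_self _).trans (Eabs hq hq1 _ habs)

end Bounds
/-- Gaussian binomial coefficient times `q` power, as appearing in the q-binomial theorem. -/
noncomputable def CC (q : ℝ) (N j : ℕ) : ℝ :=
  if j ≤ N then q ^ (j * (j - 1)) * PP q N / (PP q j * PP q (N - j)) else 0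

section Gauss

variable {q : ℝ} (hq : 0 < q) (hq1 : q < 1)

include hq hq1 in
lemma CC_zero (N : ℕ) : CC q N 0 = 1 := by
  unfold CC
  rw [if_pos (Nat.zero_le N)]
  have h0 : PP q 0 = 1 := by simp [PP, qPoch]
  have hN := (PP_pos hq hq1 N).ne'
  simp only [Nat.zero_mul, Nat.sub_zero, pow_zero, one_mul, h0]
  exact div_self hN

include hq hq1 in
lemma CC_diag (N : ℕ) : CC q N N = q ^ (N * (N - 1)) := by
  unfold CC
  rw [if_pos le_rfl]
  have h0 : PP q 0 = 1 := by simp [PP, qPoch]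
  have hN := (PP_pos hq hq1 N).ne'
  rw [Nat.sub_self, h0, mul_one, mul_div_assoc, div_self hN, mul_one]

lemma nat_exp_aux (k d : ℕ) : k * (k - 1) + 2 * (k + 1 + d) = (k + 1) * k + (2 * d + 2) := by
  rcases k with _ | m
  · omega
  · simp only [Nat.add_sub_cancel]
    ring

include hq hq1 in
lemma CC_pascal (N j : ℕ) (hj : 1 ≤ j) :
    CC q (N + 1) j = CC q N j + q ^ (2 * N) * CC q N (j - 1) := by
  obtain ⟨k, rfl⟩ : ∃ k, j = k + 1 := ⟨j - 1, by omega⟩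
  simp only [Nat.add_sub_cancel]
  rcases Nat.lt_or_ge N k with hNk | hNk
  · unfold CC
    rw [if_neg (by omega), if_neg (by omega), if_neg (by omega)]
    ring
  · rcases Nat.eq_or_lt_of_le hNk with rfl | hlt
    · unfold CC
      rw [if_pos le_rfl, if_neg (by omega), if_pos le_rfl]
      have h0 : PP q 0 = 1 := by simp [PP, qPoch]
      have hPk := (PP_pos hq hq1 k).ne'
      have hPk1 := (PP_pos hq hq1 (k+1)).ne'
      simp only [Nat.sub_self, h0, Nat.add_sub_cancel]
      have hexp : 2 * k + k * (k - 1) = (k + 1) * k := by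
        rcases k with _ | m
        · omega
        · simp only [Nat.add_sub_cancel]; ring
      rw [mul_one, mul_div_assoc, div_self hPk1, mul_one, ← hexp, pow_add,
        mul_one, mul_div_assoc, div_self hPk, mul_one]
      ring
    · obtain ⟨d, rfl⟩ : ∃ d, N = k + 1 + d := ⟨N - (k+1), by omega⟩
      unfold CC
      rw [if_pos (by omega), if_pos (by omega), if_pos (by omega)]
      have e1 : k + 1 + d + 1 - (k + 1) = d + 1 := by omega
      have e2 : k + 1 + d - (k + 1) = d := by omega
      have e3 : k + 1 + d - k = d + 1 := by omega
      have e4 : (k + 1) * (k + 1 - 1) = (k + 1) * k := by simp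
      rw [e1, e2, e3, e4]
      have hP1 : PP q (k + 1 + d + 1) = PP q (k + 1 + d) * (1 - q ^ (2 * (k + 1 + d) + 2)) :=
        PP_succ _
      have hP2 : PP q (d + 1) = PP q d * (1 - q ^ (2 * d + 2)) := PP_succ _
      have hP3 : PP q (k + 1) = PP q k * (1 - q ^ (2 * k + 2)) := PP_succ _
      have hexp2 : q ^ (2 * (k + 1 + d)) * q ^ (k * (k - 1))
          = q ^ ((k + 1) * k) * q ^ (2 * d + 2) := by
        rw [← pow_add, ← pow_add]
        congr 1
        have := nat_exp_aux k d
        omega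
      have hPk := (PP_pos hq hq1 k).ne'
      have hPd := (PP_pos hq hq1 d).ne'
      have hPkd := (PP_pos hq hq1 (k + 1 + d)).ne'
      have hf1 : (1:ℝ) - q ^ (2 * k + 2) ≠ 0 := by
        have : q ^ (2 * k + 2) < 1 := pow_lt_one₀ hq.le hq1 (by omega)
        linarith
      have hf2 : (1:ℝ) - q ^ (2 * d + 2) ≠ 0 := by
        have : q ^ (2 * d + 2) < 1 := pow_lt_one₀ hq.le hq1 (by omega)
        linarith
      have key : (1:ℝ) - q ^ (2 * (k + 1 + d) + 2) =
          (1 - q ^ (2 * d + 2)) + q ^ (2 * d + 2) * (1 - q ^ (2 * k + 2)) := by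
        have h5 : q ^ (2 * d + 2) * q ^ (2 * k + 2) = q ^ (2 * (k + 1 + d) + 2) := by
          rw [← pow_add]; congr 1; ring
        linear_combination -h5
      rw [hP1, hP2, hP3]
      field_simp
      linear_combination q^((k+1)*k) * key - (1 - q^(2*k+2)) * hexp2

include hq hq1 in
lemma gauss_binomial (N : ℕ) (x : ℝ) :
    ∑ j ∈ Finset.range (N + 1), CC q N j * x ^ j
      = ∏ i ∈ Finset.range N, (1 + x * q ^ (2 * i)) := by
  induction N generalizing x with
  | zero => simp [CC_zero hq hq1]
  | succ N ih =>
    rw [Finset.sum_range_succ' (fun j => CC q (N+1) j * x ^ j) (N+1)]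
    have hpas : ∀ j, CC q (N+1) (j+1) * x ^ (j+1)
        = CC q N (j+1) * x ^ (j+1) + (q ^ (2*N) * x) * (CC q N j * x ^ j) := by
      intro j
      rw [CC_pascal hq hq1 N (j+1) (by omega)]
      simp only [Nat.add_sub_cancel]
      ring
    rw [Finset.sum_congr rfl fun j _ => hpas j, Finset.sum_add_distrib, ← Finset.mul_sum]
    have h1 : (∑ j ∈ Finset.range (N+1), CC q N (j+1) * x ^ (j+1)) + CC q (N+1) 0 * x ^ 0
        = ∑ j ∈ Finset.range (N+1), CC q N j * x ^ j := by
      rw [CC_zero hq hq1]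
      have h3 := Finset.sum_range_succ' (fun j => CC q N j * x ^ j) (N+1)
      have h4 := Finset.sum_range_succ (fun j => CC q N j * x ^ j) (N+1)
      have h5 : CC q N (N+1) = 0 := by unfold CC; rw [if_neg (by omega)]
      rw [h4, h5] at h3
      simp only [pow_zero, mul_one, CC_zero hq hq1] at h3 ⊢
      linarith [h3]
    calc (∑ j ∈ Finset.range (N+1), CC q N (j+1) * x ^ (j+1))
          + q ^ (2*N) * x * (∑ j ∈ Finset.range (N+1), CC q N j * x ^ j) + CC q (N+1) 0 * x ^ 0
        = ((∑ j ∈ Finset.range (N+1), CC q N (j+1) * x ^ (j+1)) + CC q (N+1) 0 * x ^ 0)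
          + q ^ (2*N) * x * (∑ j ∈ Finset.range (N+1), CC q N j * x ^ j) := by ring
      _ = (∑ j ∈ Finset.range (N+1), CC q N j * x ^ j)
          + q ^ (2*N) * x * (∑ j ∈ Finset.range (N+1), CC q N j * x ^ j) := by rw [h1]
      _ = ∏ i ∈ Finset.range (N+1), (1 + x * q ^ (2 * i)) := by
            rw [Finset.prod_range_succ, ← ih x]
            ring

include hq hq1 in
lemma gauss_vanish (n : ℕ) (hn : 1 ≤ n) :
    ∑ j ∈ Finset.range (n + 1), CC q n j * (-((q ^ (2 * (n - 1)))⁻¹)) ^ j = 0 := by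
  rw [gauss_binomial hq hq1]
  refine Finset.prod_eq_zero (i := n - 1) (Finset.mem_range.mpr (by omega)) ?_
  have hne : q ^ (2 * (n - 1)) ≠ 0 := by positivity
  field_simp
  norm_num

end Gauss
section KeyIdentity

variable {q : ℝ} (hq : 0 < q) (hq1 : q < 1)

lemma cast_jj (j : ℕ) : ((j * (j - 1) : ℕ) : ℤ) = (j : ℤ) * (j : ℤ) - (j : ℤ) := by
  rcases j with _ | m
  · simp
  · simp only [Nat.add_sub_cancel]
    push_cast
    ring

include hq hq1 in
/-- Summability of `q` to a quadratic integer exponent. -/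
lemma summable_qquad (a b : ℤ) (ha : 1 ≤ a) :
    Summable (fun k : ℕ => q ^ (a * k * k + b * k) : ℕ → ℝ) := by
  obtain ⟨K0, hK0⟩ := exists_pow_lt_of_lt_one (x := (1:ℝ)/2) (y := q) (by norm_num) hq1
  refine summable_of_ratio_norm_eventually_le (r := 1/2) (by norm_num) ?_
  filter_upwards [Filter.eventually_ge_atTop (K0 + b.natAbs)] with k hk
  have hdiff : a * (k+1) * (k+1) + b * (k+1) = (a * k * k + b * k) + (a * (2*k+1) + b) := by
    push_cast; ring
  have hbig : (K0 : ℤ) ≤ a * (2*k+1) + b := by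
    have h1 : (1:ℤ) * (2*k+1) ≤ a * (2*k+1) :=
      mul_le_mul_of_nonneg_right ha (by positivity)
    have h2 : |b| = (b.natAbs : ℤ) := Int.abs_eq_natAbs b
    have h3 : (k:ℤ) ≥ K0 + b.natAbs := by exact_mod_cast hk
    have h4 : |b| ≥ -b := neg_le_abs b
    omega
  have hq0 : (0:ℝ) < q ^ (a * k * k + b * k) := zpow_pos hq _
  rw [Real.norm_eq_abs, Real.norm_eq_abs, abs_of_pos (zpow_pos hq _), abs_of_pos hq0]
  push_cast at hdiff ⊢
  rw [hdiff, zpow_add₀ hq.ne']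
  have h5 : q ^ (a * (2*(k:ℤ)+1) + b) ≤ q ^ (K0:ℤ) :=
    zpow_le_zpow_right_of_le_one₀ hq hq1.le hbig
  rw [zpow_natCast] at h5
  have := hq0.le
  nlinarith

include hq hq1 in
lemma summable_T (r : ℤ) :
    Summable (fun x : ℕ × ℕ =>
      (q ^ (2 * (x.1:ℤ) * ((x.1:ℤ) + r)) / PP q x.1) *
        (aa q x.2 * (-(q ^ (2 * ((x.1:ℤ) + r + 1)))) ^ x.2)) := by
  obtain ⟨D, hD, hDle⟩ := exists_PP_lb hq hq1
  have hu : Summable (fun k : ℕ => q ^ (2 * (k:ℤ) * k + (2*r) * k) / D) :=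
    (summable_qquad hq hq1 2 (2*r) (by norm_num)).div_const D
  have hv : Summable (fun j : ℕ => q ^ (1 * (j:ℤ) * j + (2*r+1) * j) / D) :=
    (summable_qquad hq hq1 1 (2*r+1) le_rfl).div_const D
  have huv : Summable (fun x : ℕ × ℕ =>
      (q ^ (2 * (x.1:ℤ) * x.1 + (2*r) * x.1) / D) * (q ^ (1 * (x.2:ℤ) * x.2 + (2*r+1) * x.2) / D)) :=
    hu.mul_of_nonneg hv (fun k => by positivity) (fun j => by positivity)
  refine Summable.of_abs (Summable.of_nonneg_of_le (fun x => abs_nonneg _) (fun x => ?_) huv)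
  obtain ⟨k, j⟩ := x
  have hPk := PP_pos hq hq1 k
  have hPj := PP_pos hq hq1 j
  have habs : |(q ^ (2 * (k:ℤ) * ((k:ℤ) + r)) / PP q k) *
      (aa q j * (-(q ^ (2 * ((k:ℤ) + r + 1)))) ^ j)|
      = (q ^ (2 * (k:ℤ) * ((k:ℤ) + r)) / PP q k) * ((q ^ (j*(j-1)) / PP q j) *
          q ^ (2 * ((k:ℤ) + r + 1) * j)) := by
    rw [abs_mul, abs_mul, abs_pow, abs_neg, abs_of_pos (zpow_pos hq _),
      abs_of_pos (div_pos (zpow_pos hq _) hPk), abs_of_pos (aa_pos hq hq1 j)]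
    unfold aa
    rw [← zpow_natCast (q ^ (2 * ((k:ℤ) + r + 1))) j, ← zpow_mul]
  rw [habs]
  have h1 : q ^ (2 * (k:ℤ) * ((k:ℤ) + r)) / PP q k ≤ q ^ (2 * (k:ℤ) * (k:ℤ) + (2*r) * k) / D := by
    rw [show 2 * (k:ℤ) * ((k:ℤ) + r) = 2 * (k:ℤ) * (k:ℤ) + (2*r) * k by ring]
    exact div_le_div_of_nonneg_left (zpow_pos hq _).le hD (hDle k)
  have h2 : (q ^ (j*(j-1)) / PP q j) * q ^ (2 * ((k:ℤ) + r + 1) * j)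
      ≤ q ^ (1 * (j:ℤ) * j + (2*r+1) * j) / D := by
    have hj1 : (q:ℝ) ^ (j*(j-1)) = q ^ (((j:ℤ) * j - j)) := by
      rw [← cast_jj j, zpow_natCast]
    have hj2 : q ^ (2 * ((k:ℤ) + r + 1) * j) ≤ q ^ (2 * (r + 1) * j) := by
      refine zpow_le_zpow_right_of_le_one₀ hq hq1.le ?_
      have hkj : (0:ℤ) ≤ 2 * (k:ℤ) * j := by positivity
      nlinarith [hkj]
    calc (q ^ (j*(j-1)) / PP q j) * q ^ (2 * ((k:ℤ) + r + 1) * j)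
        ≤ (q ^ (j*(j-1)) / D) * q ^ (2 * (r + 1) * j) := by
          refine mul_le_mul ?_ hj2 (zpow_pos hq _).le (by positivity)
          exact div_le_div_of_nonneg_left (pow_pos hq _).le hD (hDle j)
      _ = q ^ (1 * (j:ℤ) * j + (2*r+1) * j) / D := by
          rw [hj1, div_mul_eq_mul_div, ← zpow_add₀ hq.ne']
          congr 1
          ring
  exact mul_le_mul h1 h2 (by positivity) (by positivity)

include hq hq1 in
/-- The vanishing of the antidiagonal sums for `n ≥ 1`. -/
lemma antidiag_vanish (r : ℤ) (n : ℕ) (hn : 1 ≤ n) :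
    ∑ i ∈ Finset.range (n + 1),
      (q ^ (2 * (i:ℤ) * ((i:ℤ) + r)) / PP q i) *
        (aa q (n - i) * (-(q ^ (2 * ((i:ℤ) + r + 1)))) ^ (n - i)) = 0 := by
  have key : ∀ i ∈ Finset.range (n + 1),
      (q ^ (2 * (i:ℤ) * ((i:ℤ) + r)) / PP q i) *
        (aa q (n - i) * (-(q ^ (2 * ((i:ℤ) + r + 1)))) ^ (n - i))
      = (q ^ (2 * (n:ℤ) * ((n:ℤ) + r)) / PP q n) *
          (CC q n (n - i) * (-((q ^ (2 * (n - 1)))⁻¹)) ^ (n - i)) := by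
    intro i hi
    have hin : i ≤ n := by simpa using Nat.lt_succ_iff.mp (Finset.mem_range.mp hi)
    set j := n - i with hj
    have hji : n - j = i := by omega
    have hPi := PP_pos hq hq1 i
    have hPj := PP_pos hq hq1 j
    have hPn := PP_pos hq hq1 n
    have hCC : CC q n j = q ^ (j * (j-1)) * PP q n / (PP q j * PP q i) := by
      unfold CC
      rw [if_pos (by omega), hji]
    have hz : (-(q ^ (2 * ((i:ℤ) + r + 1)))) ^ j = (-1:ℝ) ^ j * q ^ (2 * ((i:ℤ) + r + 1) * j) := by
      rw [neg_pow, ← zpow_natCast (q ^ (2 * ((i:ℤ) + r + 1))) j, ← zpow_mul]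
    have hx : (-((q ^ (2 * (n - 1)))⁻¹) : ℝ) ^ j = (-1:ℝ) ^ j * q ^ (-(2 * ((n:ℤ) - 1)) * j) := by
      rw [neg_pow]
      congr 1
      rw [← zpow_natCast ((q ^ (2 * (n - 1)) : ℝ)⁻¹) j, ← zpow_neg_one (q ^ (2*(n-1)):ℝ),
        ← zpow_natCast q (2 * (n-1)), ← zpow_mul, ← zpow_mul]
      congr 1
      have hc : ((2 * (n - 1) : ℕ) : ℤ) = 2 * ((n:ℤ) - 1) := by omega
      rw [hc]
      ring
    rw [hz, hx, hCC]
    unfold aa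
    have hjq : (q:ℝ) ^ (j * (j - 1)) = q ^ ((j:ℤ) * j - j) := by
      rw [← cast_jj j, zpow_natCast]
    rw [hjq]
    have hn' : (i:ℤ) + (j:ℤ) = (n:ℤ) := by omega
    have hexp : 2 * (i:ℤ) * ((i:ℤ) + r) + 2 * ((i:ℤ) + r + 1) * j
        = (2 * (n:ℤ) * ((n:ℤ) + r)) + (-(2 * ((n:ℤ) - 1)) * j) := by
      linear_combination (2 * ((n:ℤ) + (i:ℤ) + (j:ℤ)) + 2*r - 2*(j:ℤ)) * hn'
    have e1 : q ^ (2 * (i:ℤ) * ((i:ℤ) + r)) * q ^ (2 * ((i:ℤ) + r + 1) * (j:ℤ))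
        = q ^ (2 * (n:ℤ) * ((n:ℤ) + r)) * q ^ (-(2 * ((n:ℤ) - 1)) * (j:ℤ)) := by
      rw [← zpow_add₀ hq.ne', ← zpow_add₀ hq.ne', hexp]
    have hVW : q ^ (2 * ((n:ℤ) - 1) * (j:ℤ)) * q ^ (-(2 * ((n:ℤ) - 1)) * (j:ℤ)) = 1 := by
      rw [← zpow_add₀ hq.ne', show 2*((n:ℤ)-1)*(j:ℤ) + (-(2*((n:ℤ)-1)))*(j:ℤ) = 0 by ring,
        zpow_zero]
    field_simp
    linear_combination e1
  rw [Finset.sum_congr rfl key, ← Finset.mul_sum]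
  have hrefl := Finset.sum_range_reflect
    (fun j => CC q n j * (-((q ^ (2 * (n - 1)))⁻¹)) ^ j) (n + 1)
  simp only [Nat.add_sub_cancel] at hrefl
  rw [hrefl, gauss_vanish hq hq1 n hn, mul_zero]

set_option maxHeartbeats 1000000 in
include hq hq1 in
lemma key_id (r : ℤ) :
    ∑' k : ℕ, (q ^ (2 * (k:ℤ) * ((k:ℤ) + r)) / PP q k) * Eq2 q (-(q ^ (2 * ((k:ℤ) + r + 1)))) = 1 := by
  set T : ℕ × ℕ → ℝ := fun x =>
    (q ^ (2 * (x.1:ℤ) * ((x.1:ℤ) + r)) / PP q x.1) *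
      (aa q x.2 * (-(q ^ (2 * ((x.1:ℤ) + r + 1)))) ^ x.2) with hT
  have hTsum : Summable T := summable_T hq hq1 r
  have h1 : ∀ k : ℕ, (q ^ (2 * (k:ℤ) * ((k:ℤ) + r)) / PP q k) *
      Eq2 q (-(q ^ (2 * ((k:ℤ) + r + 1)))) = ∑' j, T (k, j) := by
    intro k
    rw [Eq2_eq, ← tsum_mul_left]
  rw [tsum_congr h1]
  have hrow : ∀ k : ℕ, Summable (fun j => T (k, j)) := by
    intro k
    exact (summable_aaz hq hq1 (-(q ^ (2 * ((k:ℤ) + r + 1))))).mul_left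
      (q ^ (2 * (k:ℤ) * ((k:ℤ) + r)) / PP q k)
  have h2 : ∑' (k) (j), T (k, j) = ∑' x : ℕ × ℕ, T x :=
    (Summable.tsum_prod' hTsum hrow).symm
  rw [h2]
  rw [← Finset.HasAntidiagonal.sigmaAntidiagonalEquivProd.tsum_eq T]
  have hsig : Summable (fun c : (Σ n : ℕ, {x // x ∈ Finset.HasAntidiagonal.antidiagonal n}) =>
      T (Finset.HasAntidiagonal.sigmaAntidiagonalEquivProd c)) :=
    Finset.HasAntidiagonal.sigmaAntidiagonalEquivProd.summable_iff.mpr hTsum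
  rw [Summable.tsum_sigma' (fun n => (hasSum_fintype _).summable) hsig]
  have h3 : ∀ n : ℕ, ∑' (c : (Finset.HasAntidiagonal.antidiagonal n : Finset (ℕ × ℕ))),
      T (Finset.HasAntidiagonal.sigmaAntidiagonalEquivProd ⟨n, c⟩) = if n = 0 then 1 else 0 := by
    intro n
    have h4 : ∑' (c : (Finset.HasAntidiagonal.antidiagonal n : Finset (ℕ × ℕ))),
        T (Finset.HasAntidiagonal.sigmaAntidiagonalEquivProd ⟨n, c⟩)
        = ∑ p ∈ Finset.HasAntidiagonal.antidiagonal n, T p := by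
      rw [tsum_fintype]
      exact Finset.sum_finset_coe (f := T) (s := Finset.HasAntidiagonal.antidiagonal n)
    rw [h4, Finset.Nat.sum_antidiagonal_eq_sum_range_succ (fun k l => T (k, l)) n]
    rcases Nat.eq_zero_or_pos n with rfl | hn
    · simp only [if_pos rfl]
      simp [hT, aa_zero, PP, qPoch]
    · rw [if_neg (by omega)]
      exact antidiag_vanish hq hq1 r n hn
  rw [tsum_congr h3]
  exact tsum_ite_eq 0 1

end KeyIdentity
/-- If `ψ` is bounded by `C` on the lattice `{±q^{2n}}`, then so is its q²-shift. -/
theorem Tshift_bounded (q C : ℝ) (hq : 0 < q) (hq1 : q < 1) (ψ : ℝ → ℝ)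
    (hψ : ∀ n : ℤ, |ψ (q ^ (2 * n))| ≤ C ∧ |ψ (-q ^ (2 * n))| ≤ C)
    (m n : ℤ) :
    |Tshift q m ψ (q ^ (2 * n))| ≤ C := by
  set r : ℤ := m - n with hr
  set c : ℕ → ℝ := fun k =>
    q ^ (2 * (k:ℤ) * ((k:ℤ) + r)) / PP q k * Eq2 q (-(q ^ (2 * ((k:ℤ) + r + 1)))) with hc
  have hC0 : 0 ≤ C := le_trans (abs_nonneg _) (hψ 0).1
  have hqne : q ≠ 0 := hq.ne'
  -- rewrite the defining series
  have hterm : ∀ k : ℕ,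
      q ^ (2 * (k : ℤ) * ((k : ℤ) + m)) / qPoch (q ^ 2) q k * (q ^ (2 * n)) ^ (-(k : ℤ)) *
        Eq2 q (-(q ^ (2 * (m + (k : ℤ) + 1))) * (q ^ (2 * n))⁻¹) *
        ψ (q ^ (-(2 : ℤ) * (k : ℤ)) * q ^ (2 * n))
      = c k * ψ (q ^ (2 * ((n : ℤ) - (k : ℕ)))) := by
    intro k
    have h1 : ((q:ℝ) ^ (2 * n)) ^ (-(k : ℤ)) = q ^ (2 * n * (-(k:ℤ))) := (zpow_mul q _ _).symm
    have h2 : q ^ (2 * (k : ℤ) * ((k : ℤ) + m)) * q ^ (2 * n * (-(k:ℤ)))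
        = q ^ (2 * (k:ℤ) * ((k:ℤ) + r)) := by
      rw [← zpow_add₀ hqne]
      congr 1
      rw [hr]; ring
    have h3 : -(q ^ (2 * (m + (k : ℤ) + 1))) * ((q:ℝ) ^ (2 * n))⁻¹
        = -(q ^ (2 * ((k:ℤ) + r + 1))) := by
      rw [← zpow_neg, neg_mul, ← zpow_add₀ hqne]
      congr 2
      rw [hr]; ring
    have h4 : (q:ℝ) ^ (-(2 : ℤ) * (k : ℤ)) * q ^ (2 * n) = q ^ (2 * ((n : ℤ) - (k : ℕ))) := by
      rw [← zpow_add₀ hqne]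
      congr 1
      ring
    rw [h1, h3, h4, hc]
    have : q ^ (2 * (k : ℤ) * ((k : ℤ) + m)) / qPoch (q ^ 2) q k * q ^ (2 * n * (-(k:ℤ)))
        = q ^ (2 * (k:ℤ) * ((k:ℤ) + r)) / PP q k := by
      rw [div_mul_eq_mul_div, h2, PP]
    rw [this]
  unfold Tshift
  rw [tsum_congr hterm]
  -- bounds on c
  obtain ⟨D, hD, hDle⟩ := exists_PP_lb hq hq1
  have hcnn : ∀ k, 0 ≤ c k := fun k =>
    mul_nonneg (div_pos (zpow_pos hq _) (PP_pos hq hq1 k)).le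
      (Eq2_lattice_nonneg hq hq1 ((k:ℤ) + r + 1))
  have hcle : ∀ k, c k ≤ (∑' j, aa q j) * (q ^ (2 * (k:ℤ) * (k:ℤ) + (2*r) * k) / D) := by
    intro k
    have hE := Eq2_lattice_le hq hq1 ((k:ℤ) + r + 1)
    have hEnn := Eq2_lattice_nonneg hq hq1 ((k:ℤ) + r + 1)
    have hA : q ^ (2 * (k:ℤ) * ((k:ℤ) + r)) / PP q k
        ≤ q ^ (2 * (k:ℤ) * (k:ℤ) + (2*r) * k) / D := by
      rw [show 2 * (k:ℤ) * ((k:ℤ) + r) = 2 * (k:ℤ) * (k:ℤ) + (2*r) * k by ring]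
      exact div_le_div_of_nonneg_left (zpow_pos hq _).le hD (hDle k)
    calc c k ≤ (q ^ (2 * (k:ℤ) * ((k:ℤ) + r)) / PP q k) * (∑' j, aa q j) :=
          mul_le_mul_of_nonneg_left hE (div_pos (zpow_pos hq _) (PP_pos hq hq1 k)).le
      _ ≤ (q ^ (2 * (k:ℤ) * (k:ℤ) + (2*r) * k) / D) * (∑' j, aa q j) := by
          refine mul_le_mul_of_nonneg_right hA (tsum_nonneg fun j => (aa_pos hq hq1 j).le)
      _ = (∑' j, aa q j) * (q ^ (2 * (k:ℤ) * (k:ℤ) + (2*r) * k) / D) := by ring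
  have hcsum : Summable c := by
    refine Summable.of_nonneg_of_le hcnn hcle ?_
    exact (((summable_qquad hq hq1 2 (2*r) (by norm_num)).div_const D).mul_left _)
  have hpsi : ∀ k : ℕ, |ψ (q ^ (2 * ((n : ℤ) - (k : ℕ))))| ≤ C := fun k => (hψ (n - k)).1
  have hnormsum : Summable (fun k => ‖c k * ψ (q ^ (2 * ((n : ℤ) - (k : ℕ))))‖) := by
    refine Summable.of_nonneg_of_le (fun k => norm_nonneg _) (fun k => ?_) (hcsum.mul_right C)
    rw [Real.norm_eq_abs, abs_mul, abs_of_nonneg (hcnn k)]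
    exact mul_le_mul_of_nonneg_left (hpsi k) (hcnn k)
  calc |∑' k, c k * ψ (q ^ (2 * ((n : ℤ) - (k : ℕ))))|
      ≤ ∑' k, ‖c k * ψ (q ^ (2 * ((n : ℤ) - (k : ℕ))))‖ := norm_tsum_le_tsum_norm hnormsum
    _ ≤ ∑' k, c k * C := by
        refine Summable.tsum_le_tsum (fun k => ?_) hnormsum (hcsum.mul_right C)
        rw [Real.norm_eq_abs, abs_mul, abs_of_nonneg (hcnn k)]
        exact mul_le_mul_of_nonneg_left (hpsi k) (hcnn k)
    _ = (∑' k, c k) * C := tsum_mul_right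
    _ = 1 * C := by rw [hc, key_id hq hq1 r]
    _ = C := one_mul C
end
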